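/- (H-finiteness of the frontier is independent of the generating set) Let G be a group with two finite generating sets S and S', let H ≤ G, and let U ⊆ G be an H-invariant subset (hU = U for all h ∈ H). For a finite generating set T of G, define the T-frontier of U as {u ∈ U : ut ∉ U for some t ∈ T ∪ T⁻¹}. If the S-frontier of U is contained in H·F for some finite subset F ⊆ G, then the S'-frontier of U is contained in H·F' for some finite subset F' ⊆ G. -/

import Mathlib

open Pointwise

/-- The frontier of `A ⊆ G` with respect to the finite generating set `T`. -/
def frontierIn {G : Type*} [Group G] (T : Finset G) (A : Set G) : Set G :=
  {a : G | a ∈ A ∧ ∃ t : G, (t ∈ T ∨ t⁻¹ ∈ T) ∧ a * t ∉ A}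

/-!
Call `u` a crossing point of `g` if exactly one of `u`, `u * g` lies in `U`. If `u` crosses
`g * g'`, then `u` crosses `g` or `u * g` crosses `g'`; and `u` crosses `g⁻¹` iff `u * g⁻¹`
crosses `g`. Hence, for any set `B`, the `g` whose crossing points all lie in `B * P` for some
finite `P` form a subgroup. For `B` the `S`-frontier of `U` it contains `S`, hence is all of
`G`; since every `S'`-frontier point crosses some `t ∈ S' ∪ S'⁻¹`, the `S'`-frontier lies in
`S`-frontier `* P ⊆ H * F * P` for a finite `P`.
-/

section

variable {G : Type*} [Group G]

def crossingSet (A : Set G) (g : G) : Set G := {u | ¬(u ∈ A ↔ u * g ∈ A)}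

theorem crossingSet_mul_subset (A : Set G) (g g' : G) :
    crossingSet A (g * g') ⊆ crossingSet A g ∪ crossingSet A g' * {g⁻¹} := by
  intro u hu
  by_cases hg : u ∈ crossingSet A g
  · exact Or.inl hg
  · refine Or.inr ⟨u * g, ?_, g⁻¹, rfl, by simp⟩
    simp only [crossingSet, Set.mem_ofPred_eq, not_not, mul_assoc] at hu hg ⊢
    rwa [hg] at hu

theorem crossingSet_inv_subset (A : Set G) (g : G) :
    crossingSet A g⁻¹ ⊆ crossingSet A g * {g} := by
  intro u hu
  refine ⟨u * g⁻¹, ?_, g, rfl, by simp⟩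
  simp only [crossingSet, Set.mem_ofPred_eq, inv_mul_cancel_right] at hu ⊢
  exact fun h => hu h.symm

def boundedCrossingSubgroup (A B : Set G) : Subgroup G where
  carrier := {g | ∃ P : Finset G, crossingSet A g ⊆ B * P}
  one_mem' := ⟨∅, fun u hu => (hu (by rw [mul_one])).elim⟩
  mul_mem' := by
    rintro g g' ⟨P, hP⟩ ⟨P', hP'⟩
    classical
    refine ⟨P ∪ P' * {g⁻¹}, ?_⟩
    calc crossingSet A (g * g') ⊆ crossingSet A g ∪ crossingSet A g' * {g⁻¹} :=
          crossingSet_mul_subset A g g'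
      _ ⊆ B * P ∪ B * P' * {g⁻¹} :=
          Set.union_subset_union hP (Set.mul_subset_mul_right hP')
      _ = B * ↑(P ∪ P' * {g⁻¹}) := by
          rw [Finset.coe_union, Finset.coe_mul, Finset.coe_singleton, Set.mul_union, mul_assoc]
  inv_mem' := by
    rintro g ⟨P, hP⟩
    classical
    refine ⟨P * {g}, ?_⟩
    calc crossingSet A g⁻¹ ⊆ crossingSet A g * {g} := crossingSet_inv_subset A g
      _ ⊆ B * P * {g} := Set.mul_subset_mul_right hP
      _ = B * ↑(P * {g}) := by rw [Finset.coe_mul, Finset.coe_singleton, mul_assoc]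

theorem mem_boundedCrossingSubgroup_frontierIn {T : Finset G} {s : G} (hs : s ∈ T) (A : Set G) :
    s ∈ boundedCrossingSubgroup A (frontierIn T A) := by
  classical
  refine ⟨{1, s⁻¹}, fun u hu => ?_⟩
  by_cases huA : u ∈ A
  · exact ⟨u, ⟨huA, s, Or.inl hs, fun h => hu (iff_of_true huA h)⟩, 1, by simp, mul_one u⟩
  · have hus : u * s ∈ A := by_contra fun h => hu (iff_of_false huA h)
    exact ⟨u * s, ⟨hus, s⁻¹, Or.inr (by simpa using hs), by simpa using huA⟩,
      s⁻¹, by simp, mul_inv_cancel_right u s⟩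

theorem boundedCrossingSubgroup_frontierIn_eq_top {T : Finset G}
    (hT : Subgroup.closure (T : Set G) = ⊤) (A : Set G) :
    boundedCrossingSubgroup A (frontierIn T A) = ⊤ :=
  top_le_iff.1 <| hT ▸ (Subgroup.closure_le _).2 fun _ hs =>
    mem_boundedCrossingSubgroup_frontierIn hs A

theorem exists_frontierIn_subset_mul_finset {A B : Set G}
    (h : boundedCrossingSubgroup A B = ⊤) (T : Finset G) :
    ∃ P : Finset G, frontierIn T A ⊆ B * P := by
  classical
  choose P hP using fun g => (h ▸ Subgroup.mem_top g : g ∈ boundedCrossingSubgroup A B)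
  refine ⟨T.biUnion fun t => P t ∪ P t⁻¹, ?_⟩
  rintro a ⟨haA, t, ht, hat⟩
  have ha : a ∈ crossingSet A t := fun h => hat (h.1 haA)
  have hPt : P t ⊆ T.biUnion fun t => P t ∪ P t⁻¹ := by
    rcases ht with ht | ht
    · exact Finset.subset_union_left.trans
        (Finset.subset_biUnion_of_mem (fun t => P t ∪ P t⁻¹) ht)
    · have := Finset.subset_union_right.trans
        (Finset.subset_biUnion_of_mem (fun t => P t ∪ P t⁻¹) ht)
      rwa [inv_inv] at this
  exact Set.mul_subset_mul_left (Finset.coe_subset.2 hPt) (hP t ha)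

end

theorem frontier_hfiniteness_independent_of_generating_set_general
    {G : Type*} [Group G]
    (S S' : Finset G)
    (hS : Subgroup.closure (S : Set G) = ⊤)
    (H : Subgroup G) (U : Set G)
    (F : Finset G) (hF : frontierIn S U ⊆ (H : Set G) * (F : Set G)) :
    ∃ F' : Finset G, frontierIn S' U ⊆ (H : Set G) * (F' : Set G) := by
  classical
  obtain ⟨P, hP⟩ :=
    exists_frontierIn_subset_mul_finset (boundedCrossingSubgroup_frontierIn_eq_top hS U) S'
  refine ⟨F * P, ?_⟩
  calc frontierIn S' U ⊆ frontierIn S U * P := hP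
    _ ⊆ H * F * P := Set.mul_subset_mul_right hF
    _ = H * ↑(F * P) := by rw [Finset.coe_mul, mul_assoc]

/-- **`H`-finiteness of the frontier is independent of the generating set.**  Let `G` be
generated by each of the finite sets `S` and `S'`, let `H ≤ G`, and let `U ⊆ G` be
`H`-invariant.  If the `S`-frontier of `U` is contained in `H·F` for some finite `F`, then
the `S'`-frontier of `U` is contained in `H·F'` for some finite `F'`. -/
theorem frontier_hfiniteness_independent_of_generating_set
    {G : Type*} [Group G]
    (S S' : Finset G)
    (hS : Subgroup.closure (S : Set G) = ⊤)
    (hS' : Subgroup.closure (S' : Set G) = ⊤)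
    (H : Subgroup G) (U : Set G)
    (hU : ∀ h ∈ H, h • U = U)
    (F : Finset G) (hF : frontierIn S U ⊆ (H : Set G) * (F : Set G)) :
    ∃ F' : Finset G, frontierIn S' U ⊆ (H : Set G) * (F' : Set G) :=
  frontier_hfiniteness_independent_of_generating_set_general S S' hS H U F hF
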